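/- Let p be a prime, let S ⊂ ℚ_p be a scaling set of an MRA and let W ⊂ ℚ_p be a wavelet set whose associated wavelet is orthogonal to the space V_0 of that MRA. Then μ(S ∩ W) = 0, i.e. S and W are disjoint up to a set of measure zero. -/

import Mathlib

open MeasureTheory Filter Topology Set
open scoped ENNReal ComplexConjugate

noncomputable section

namespace PadicScaling

attribute [local instance] Classical.propDecidable

variable (p : ℕ) [hp : Fact p.Prime]

instance : MeasurableSpace ℚ_[p] := borel _
instance : BorelSpace ℚ_[p] := ⟨rfl⟩

/-- The closed unit ball `ℤ_p = {x : |x|_p ≤ 1}` as a positive compact set. -/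
def unitBallPC : TopologicalSpace.PositiveCompacts ℚ_[p] where
  carrier := Metric.closedBall 0 1
  isCompact' := isCompact_closedBall 0 1
  interior_nonempty' :=
    ⟨0, interior_maximal Metric.ball_subset_closedBall Metric.isOpen_ball
      (Metric.mem_ball_self one_pos)⟩

/-- The Haar measure on `ℚ_p`, normalized so that `μ(ℤ_p) = 1`. -/
def μp : Measure ℚ_[p] := Measure.addHaarMeasure (unitBallPC p)

/-- The dilate `c·S = {c·x : x ∈ S}` of a set `S ⊆ ℚ_p`. -/
def dil (c : ℚ_[p]) (S : Set ℚ_[p]) : Set ℚ_[p] := (fun x => c * x) '' S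

/-- The ball `B_γ(0) = {x : |x|_p ≤ p^γ}`. -/
def ball (γ : ℤ) : Set ℚ_[p] := {x : ℚ_[p] | ‖x‖ ≤ (p : ℝ) ^ γ}

/-- The fractional part `{x}_p` of a `p`-adic number, as a rational number:
the unique rational `q` of the form `k/p^m` with `0 ≤ q < 1` and `x - q ∈ ℤ_p`. -/
def padicFract (x : ℚ_[p]) : ℚ :=
  if h : ∃ q : ℚ, (0 ≤ q ∧ q < 1 ∧ ∃ m k : ℕ, q = (k : ℚ) / (p : ℚ) ^ m) ∧
      ‖x - (q : ℚ_[p])‖ ≤ 1 then h.choose else 0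

/-- The standard additive character `χ_p(x) = e^{2πi {x}_p}` of `ℚ_p`. -/
def chi (x : ℚ_[p]) : ℂ := Complex.exp (2 * Real.pi * Complex.I * (padicFract p x : ℂ))

/-- The set `I_p` of `p`-adic fractional numbers, i.e. numbers of the form
`k/p^m` with `0 ≤ k < p^m`. -/
def Ip : Set ℚ_[p] := {x | ∃ m k : ℕ, k < p ^ m ∧ x = (k : ℚ_[p]) / (p : ℚ_[p]) ^ m}

/-- The Fourier transform `f̂(ξ) = ∫ χ_p(ξ x) f(x) dx` on `ℚ_p`. -/
def FT (f : ℚ_[p] → ℂ) : ℚ_[p] → ℂ := fun ξ => ∫ x, chi p (ξ * x) * f x ∂(μp p)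

/-- The inverse Fourier transform `f̌(ξ) = ∫ χ_p(-ξ x) f(x) dx` on `ℚ_p`. -/
def invFT (f : ℚ_[p] → ℂ) : ℚ_[p] → ℂ := fun ξ => ∫ x, chi p (-(ξ * x)) * f x ∂(μp p)

/-- `f`, as an element of `L²(ℚ_p)`, belongs to the subspace `V`. -/
def inL2 (f : ℚ_[p] → ℂ) (V : Submodule ℂ (Lp ℂ 2 (μp p))) : Prop :=
  ∃ hf : MemLp f 2 (μp p), hf.toLp f ∈ V

/-- The set of `L²`-classes of the translates `φ(· - a)`, `a ∈ I_p`. -/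
def translatesSet (φ : ℚ_[p] → ℂ) : Set (Lp ℂ 2 (μp p)) :=
  {h | ∃ a ∈ Ip p, ∃ hm : MemLp (fun x => φ (x - a)) 2 (μp p), h = hm.toLp _}

/-- A multiresolution analysis of `L²(ℚ_p)` with scaling function `φ`:
an increasing family of closed subspaces `V j` with dense union and trivial
intersection, compatible with dilation by `p⁻¹`, such that the `I_p`-translates
of `φ` form an orthonormal basis of `V 0`. -/
structure IsMRA (V : ℤ → Submodule ℂ (Lp ℂ 2 (μp p))) (φ : ℚ_[p] → ℂ) : Prop where
  mono : ∀ j : ℤ, V j ≤ V (j + 1)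
  closed : ∀ j : ℤ, IsClosed (V j : Set (Lp ℂ 2 (μp p)))
  dense_union : Dense (⋃ j : ℤ, (V j : Set (Lp ℂ 2 (μp p))))
  trivial_inter : (⋂ j : ℤ, (V j : Set (Lp ℂ 2 (μp p)))) = {0}
  dilate : ∀ (j : ℤ) (f : ℚ_[p] → ℂ),
    inL2 p f (V j) ↔ inL2 p (fun x => f ((p : ℚ_[p])⁻¹ * x)) (V (j + 1))
  phi_mem : inL2 p φ (V 0)
  orthonormal : ∀ a ∈ Ip p, ∀ b ∈ Ip p,
    ∫ x, φ (x - a) * conj (φ (x - b)) ∂(μp p) = if a = b then 1 else 0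
  complete : (Submodule.span ℂ (translatesSet p φ)).topologicalClosure = V 0

/-- `φ` is a scaling function of some MRA of `L²(ℚ_p)`. -/
def IsScalingFunction (φ : ℚ_[p] → ℂ) : Prop :=
  ∃ V : ℤ → Submodule ℂ (Lp ℂ 2 (μp p)), IsMRA p V φ

/-- A measurable set `S ⊆ ℚ_p` is a scaling set if `(1_S)ˇ` is a scaling function
of an MRA in `L²(ℚ_p)`. -/
def IsScalingSet (S : Set ℚ_[p]) : Prop :=
  MeasurableSet S ∧ IsScalingFunction p (invFT p (Set.indicator S 1))

/-- The dilated translate `x ↦ p^{j/2} ψ(p^{-j} x - a)`. -/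
def wdil (ψ : ℚ_[p] → ℂ) (j : ℤ) (a : ℚ_[p]) : ℚ_[p] → ℂ :=
  fun x => ((((p : ℝ) ^ ((j : ℝ) / 2) : ℝ)) : ℂ) * ψ ((p : ℚ_[p]) ^ (-j) * x - a)

/-- The `L²`-classes of the affine system `p^{j/2} ψ_n(p^{-j}· - a)`,
`j ∈ ℤ`, `a ∈ I_p`, `1 ≤ n ≤ L`. -/
def waveletSystem {L : ℕ} (ψ : Fin L → ℚ_[p] → ℂ) : Set (Lp ℂ 2 (μp p)) :=
  {h | ∃ (n : Fin L) (j : ℤ) (a : ℚ_[p]), a ∈ Ip p ∧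
        ∃ hm : MemLp (wdil p (ψ n) j a) 2 (μp p), h = hm.toLp _}

/-- `ψ_1, …, ψ_L` is a multiwavelet for `L²(ℚ_p)`: the affine system
`{p^{j/2} ψ_n(p^{-j}· - a)}` is an orthonormal basis of `L²(ℚ_p)`. -/
def IsMultiwavelet {L : ℕ} (ψ : Fin L → ℚ_[p] → ℂ) : Prop :=
  (∀ (n n' : Fin L) (j j' : ℤ) (a a' : ℚ_[p]), a ∈ Ip p → a' ∈ Ip p →
      ∫ x, wdil p (ψ n) j a x * conj (wdil p (ψ n') j' a' x) ∂(μp p) =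
        if n = n' ∧ j = j' ∧ a = a' then 1 else 0) ∧
  (Submodule.span ℂ (waveletSystem p ψ)).topologicalClosure = ⊤

/-- A measurable set `W ⊆ ℚ_p` is a multiwavelet set of order `L` if
`W = W_1 ∪ … ∪ W_L` and the functions `ψ_n` with `ψ̂_n = 1_{W_n}` form a
multiwavelet for `L²(ℚ_p)`. -/
def IsMultiwaveletSet (L : ℕ) (W : Set ℚ_[p]) : Prop :=
  MeasurableSet W ∧
  ∃ Wn : Fin L → Set ℚ_[p], (∀ n, MeasurableSet (Wn n)) ∧ W = ⋃ n, Wn n ∧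
    ∃ ψ : Fin L → ℚ_[p] → ℂ,
      (∀ n, FT p (ψ n) = Set.indicator (Wn n) 1) ∧ IsMultiwavelet p ψ

/-- A measurable set `G ⊆ ℚ_p` is a generalized scaling set of order `L` if
`μ(G) = L/(p-1)` and `p⁻¹G \ G` is a multiwavelet set of order `L`. -/
def IsGeneralizedScalingSet (L : ℕ) (G : Set ℚ_[p]) : Prop :=
  MeasurableSet G ∧ μp p G = (L : ℝ≥0∞) / ((p : ℝ≥0∞) - 1) ∧
  IsMultiwaveletSet p L (dil p (p : ℚ_[p])⁻¹ G \ G)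

/-- The class `D_N^M` of complex-valued functions on `ℚ_p` that are locally
constant with constancy parameter `p^{-M}` (i.e. `p^M`-periodic) and
supported on `B_N(0)`. -/
def DNM (M N : ℤ) : Set (ℚ_[p] → ℂ) :=
  {f | (∀ x y : ℚ_[p], ‖y‖ ≤ (p : ℝ) ^ (-M) → f (x + y) = f x) ∧
       ∀ x : ℚ_[p], f x ≠ 0 → ‖x‖ ≤ (p : ℝ) ^ N}

/-- The space `V_j`: closure of the span of `{φ(p^{-j}· - a) : a ∈ I_p}`. -/
def Vspace (φ : ℚ_[p] → ℂ) (j : ℤ) : Submodule ℂ (Lp ℂ 2 (μp p)) :=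
  (Submodule.span ℂ
    {h : Lp ℂ 2 (μp p) | ∃ a ∈ Ip p,
      ∃ hm : MemLp (fun x => φ ((p : ℚ_[p]) ^ (-j) * x - a)) 2 (μp p),
        h = hm.toLp _}).topologicalClosure

/-- `m` is a trigonometric polynomial of degree `d`: a finite linear
combination `Σ_{a ∈ F} c_a χ_p(a ·)` of characters with translations in `I_p`,
with `d` nontrivial terms. -/
def IsTrigPolyOfDeg (m : ℚ_[p] → ℂ) (d : ℕ) : Prop :=
  ∃ (F : Finset ℚ_[p]) (c : ℚ_[p] → ℂ), (↑F : Set ℚ_[p]) ⊆ Ip p ∧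
    (∀ a ∈ F, c a ≠ 0) ∧ (∀ ξ, m ξ = ∑ a ∈ F, c a * chi p (a * ξ)) ∧ F.card = d

/-- The set `J_{p,m}` of fractions `s_{-m}/p^m + … + s_{-1}/p` with digits in
`{0,…,p-1}` and `s_{-m} ≠ 0`; equivalently `{k/p^m : 0 ≤ k < p^m, p ∤ k}`. -/
def Jpm (m : ℕ) : Set ℚ_[p] :=
  {x | ∃ k : ℕ, k < p ^ m ∧ ¬ (p : ℕ) ∣ k ∧ x = (k : ℚ_[p]) / (p : ℚ_[p]) ^ m}


/-! The scaling function `φ = (1_S)ˇ` lies in `V 0`, so `⟪ψ, φ⟫ = 0`. Writing `φ` as an integral over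
`S` and applying Fubini, `⟪ψ, φ⟫ = ∫_S conj ψ̂ = ∫_S 1_W = μ(S ∩ W)`, using `χ_p(-x) = conj χ_p(x)`;
the latter holds because `{x}_p + {-x}_p` is an integer.

`FT` and `invFT` are Bochner integrals, hence `0` off `L¹`. This is harmless: `φ ≠ 0` (it has
norm one) forces `μ S < ∞`, and if `ψ ∉ L¹` then `1_W = ψ̂ = 0`, so `W = ∅`. -/

variable {p}

section FractionalPart

lemma exists_intCast_eq_of_mul_pow_eq {r : ℚ} {M : ℕ} {z : ℤ} (hr : r * p ^ M = z)
    (h : ‖(r : ℚ_[p])‖ ≤ 1) : ∃ n : ℤ, r = n := by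
  have hz : ‖(z : ℚ_[p])‖ ≤ (p : ℝ) ^ (-M : ℤ) := by
    have : (z : ℚ_[p]) = (r : ℚ_[p]) * (p : ℚ_[p]) ^ M := by exact_mod_cast hr.symm
    rw [this, norm_mul, Padic.norm_p_pow]
    exact mul_le_of_le_one_left (by positivity) h
  obtain ⟨n, rfl⟩ := (Padic.norm_int_le_pow_iff_dvd z M).1 hz
  refine ⟨n, mul_right_cancel₀ (pow_ne_zero M (Nat.cast_ne_zero.2 hp.out.ne_zero)) ?_⟩
  rw [hr]
  push_cast
  ring

lemma exists_intCast_eq_of_norm_le_one {r : ℚ} {k₁ k₂ : ℤ} {m₁ m₂ : ℕ}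
    (hr : r = k₁ / p ^ m₁ + k₂ / p ^ m₂) (h : ‖(r : ℚ_[p])‖ ≤ 1) : ∃ n : ℤ, r = n := by
  have hp0 : (p : ℚ) ≠ 0 := Nat.cast_ne_zero.2 hp.out.ne_zero
  refine exists_intCast_eq_of_mul_pow_eq (M := m₁ + m₂) (z := k₁ * p ^ m₂ + k₂ * p ^ m₁) ?_ h
  rw [hr]
  field_simp
  push_cast
  ring

lemma exists_padicFract_witness (x : ℚ_[p]) :
    ∃ q : ℚ, (0 ≤ q ∧ q < 1 ∧ ∃ m k : ℕ, q = (k : ℚ) / (p : ℚ) ^ m) ∧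
      ‖x - (q : ℚ_[p])‖ ≤ 1 := by
  have hp0 : (p : ℚ_[p]) ≠ 0 := Nat.cast_ne_zero.2 hp.out.ne_zero
  obtain ⟨m, hm⟩ := pow_unbounded_of_one_lt ‖x‖ (Nat.one_lt_cast.2 hp.out.one_lt)
  have hy : ‖x * (p : ℚ_[p]) ^ m‖ ≤ 1 := by
    rw [norm_mul, Padic.norm_p_pow, zpow_neg, zpow_natCast, ← div_eq_mul_inv]
    exact div_le_one_of_le₀ hm.le (by positivity)
  set y : ℤ_[p] := ⟨x * (p : ℚ_[p]) ^ m, hy⟩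
  have happr := (PadicInt.norm_le_pow_iff_mem_span_pow _ m).2 (y.appr_spec m)
  have hppos : (0 : ℚ) < (p : ℚ) ^ m := pow_pos (Nat.cast_pos.2 hp.out.pos) m
  refine ⟨(y.appr m : ℚ) / (p : ℚ) ^ m, ⟨by positivity, ?_, m, _, rfl⟩, ?_⟩
  · rw [div_lt_one hppos]
    exact_mod_cast y.appr_lt m
  · have : x - (((y.appr m : ℚ) / (p : ℚ) ^ m : ℚ) : ℚ_[p])
        = ((y - y.appr m : ℤ_[p]) : ℚ_[p]) / (p : ℚ_[p]) ^ m := by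
      push_cast
      field_simp
      rfl
    rw [this, norm_div, Padic.norm_p_pow, div_le_one (zpow_pos (Nat.cast_pos.2 hp.out.pos) _)]
    exact happr

lemma padicFract_spec (x : ℚ_[p]) :
    (0 ≤ padicFract p x ∧ padicFract p x < 1 ∧
      ∃ m k : ℕ, padicFract p x = (k : ℚ) / (p : ℚ) ^ m) ∧
    ‖x - (padicFract p x : ℚ_[p])‖ ≤ 1 := by
  rw [padicFract, dif_pos (exists_padicFract_witness x)]
  exact (exists_padicFract_witness x).choose_spec

lemma padicFract_eq_of_norm_sub_le_one {x : ℚ_[p]} {q : ℚ} {m k : ℕ} (hq0 : 0 ≤ q) (hq1 : q < 1)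
    (hq : q = (k : ℚ) / (p : ℚ) ^ m) (hx : ‖x - (q : ℚ_[p])‖ ≤ 1) : padicFract p x = q := by
  obtain ⟨⟨h0, h1, m', k', hk'⟩, hx'⟩ := padicFract_spec x
  have hnorm : ‖((padicFract p x - q : ℚ) : ℚ_[p])‖ ≤ 1 := by
    rw [Rat.cast_sub, ← dist_eq_norm]
    rw [← dist_eq_norm] at hx hx'
    exact (dist_triangle_max _ x _).trans (max_le (dist_comm x _ ▸ hx') hx)
  obtain ⟨n, hn⟩ := exists_intCast_eq_of_norm_le_one (k₁ := k') (m₁ := m') (k₂ := -k) (m₂ := m)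
    (by rw [hk', hq]; push_cast; ring) hnorm
  obtain rfl : n = 0 := by
    have : n < 1 := by exact_mod_cast (by linarith : (n : ℚ) < 1)
    have : -1 < n := by exact_mod_cast (by linarith : (-1 : ℚ) < n)
    omega
  rw [Int.cast_zero, sub_eq_zero] at hn
  exact hn

lemma padicFract_congr {x y : ℚ_[p]} (h : ‖x - y‖ ≤ 1) : padicFract p x = padicFract p y := by
  obtain ⟨⟨h0, h1, m, k, hk⟩, hy⟩ := padicFract_spec y
  refine padicFract_eq_of_norm_sub_le_one h0 h1 hk ?_
  rw [← dist_eq_norm] at h hy ⊢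
  exact (dist_triangle_max _ y _).trans (max_le h hy)

lemma exists_padicFract_add_padicFract_neg_eq_intCast (x : ℚ_[p]) :
    ∃ n : ℤ, padicFract p x + padicFract p (-x) = n := by
  obtain ⟨⟨-, -, m, k, hk⟩, hx⟩ := padicFract_spec x
  obtain ⟨⟨-, -, m', k', hk'⟩, hx'⟩ := padicFract_spec (-x)
  refine exists_intCast_eq_of_norm_le_one (p := p) (k₁ := k) (m₁ := m) (k₂ := k') (m₂ := m')
    (by rw [hk, hk']; push_cast; ring) ?_
  have : ((padicFract p x + padicFract p (-x) : ℚ) : ℚ_[p])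
      = -((x - padicFract p x) + (-x - padicFract p (-x))) := by
    push_cast; ring
  rw [this, norm_neg]
  exact (IsUltrametricDist.norm_add_le_max _ _).trans (max_le hx hx')

end FractionalPart

section Character

lemma norm_chi (x : ℚ_[p]) : ‖chi p x‖ = 1 := by
  rw [chi, show 2 * (Real.pi : ℂ) * Complex.I * (padicFract p x : ℂ)
    = ((2 * Real.pi * padicFract p x : ℝ) : ℂ) * Complex.I by push_cast; ring]
  exact Complex.norm_exp_ofReal_mul_I _

lemma chi_neg (x : ℚ_[p]) : chi p (-x) = conj (chi p x) := by
  obtain ⟨n, hn⟩ := exists_padicFract_add_padicFract_neg_eq_intCast x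
  have hn' : (padicFract p (-x) : ℂ) = n - padicFract p x := by
    rw [eq_sub_iff_add_eq']; exact_mod_cast hn
  rw [chi, chi, ← Complex.exp_conj, hn']
  have hconj : conj (2 * (Real.pi : ℂ) * Complex.I * (padicFract p x : ℂ))
      = -(2 * Real.pi * Complex.I * (padicFract p x : ℂ)) := by
    simp [Complex.conj_ofReal, map_ofNat]
  rw [hconj, mul_sub, Complex.exp_sub, show 2 * (Real.pi : ℂ) * Complex.I * n
    = n * (2 * Real.pi * Complex.I) by ring, Complex.exp_int_mul_two_pi_mul_I, Complex.exp_neg,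
    one_div]

lemma continuous_chi : Continuous (chi p) :=
  continuous_iff_continuousAt.2 fun x ↦ by
    refine (continuousAt_const (y := chi p x)).congr ?_
    filter_upwards [Metric.ball_mem_nhds x one_pos] with y hy
    rw [Metric.mem_ball, dist_comm, dist_eq_norm] at hy
    rw [chi, chi, padicFract_congr hy.le]

end Character

instance : (μp p).IsAddHaarMeasure := Measure.isAddHaarMeasure_addHaarMeasure _

section Fourier

variable {f : ℚ_[p] → ℂ}

lemma integrable_of_integrable_chi_mul {g : ℚ_[p] → ℚ_[p]} (hf : AEStronglyMeasurable f (μp p))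
    (h : Integrable (fun x ↦ chi p (g x) * f x) (μp p)) : Integrable f (μp p) :=
  h.norm.mono' hf (Eventually.of_forall fun x ↦ by simp [norm_chi])

lemma FT_eq_zero_of_not_integrable (hf : AEStronglyMeasurable f (μp p))
    (h : ¬Integrable f (μp p)) : FT p f = 0 :=
  funext fun _ ↦ integral_undef fun hi ↦ h (integrable_of_integrable_chi_mul hf hi)

lemma invFT_eq_zero_of_not_integrable (hf : AEStronglyMeasurable f (μp p))
    (h : ¬Integrable f (μp p)) : invFT p f = 0 :=
  funext fun _ ↦ integral_undef fun hi ↦ h (integrable_of_integrable_chi_mul hf hi)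

lemma integral_conj_mul_invFT {ψ g : ℚ_[p] → ℂ} (hψ : Integrable ψ (μp p))
    (hg : Integrable g (μp p)) :
    ∫ x, conj (ψ x) * invFT p g x ∂μp p = ∫ t, conj (FT p ψ t) * g t ∂μp p := by
  have hint : Integrable (fun z : ℚ_[p] × ℚ_[p] ↦ conj (ψ z.1) * (chi p (-(z.1 * z.2)) * g z.2))
      ((μp p).prod (μp p)) := by
    refine (hψ.norm.mul_prod hg.norm).mono' ?_ (Eventually.of_forall fun z ↦ ?_)
    · exact (RCLike.continuous_conj.comp_aestronglyMeasurable hψ.1.comp_fst).mul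
        (((continuous_chi.comp (continuous_fst.mul continuous_snd).neg).aestronglyMeasurable).mul
          hg.1.comp_snd)
    · simp [norm_chi]
  calc ∫ x, conj (ψ x) * invFT p g x ∂μp p
      = ∫ x, ∫ t, conj (ψ x) * (chi p (-(x * t)) * g t) ∂μp p ∂μp p := by
        simp_rw [invFT, integral_const_mul]
    _ = ∫ t, ∫ x, conj (ψ x) * (chi p (-(x * t)) * g t) ∂μp p ∂μp p :=
        integral_integral_swap hint
    _ = ∫ t, conj (FT p ψ t) * g t ∂μp p := by
        refine integral_congr_ae (Eventually.of_forall fun t ↦ ?_)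
        simp only [FT, ← integral_conj, ← integral_mul_const, map_mul, ← chi_neg, mul_comm t]
        congr 1
        ext x
        ring

lemma measure_lt_top_of_invFT_indicator_ne_zero {S : Set ℚ_[p]} (hS : MeasurableSet S)
    (h : invFT p (S.indicator 1) ≠ 0) : μp p S < ∞ := by
  by_contra hS'
  refine h (invFT_eq_zero_of_not_integrable
    ((aestronglyMeasurable_const).indicator hS) fun hi ↦ hS' ?_)
  rw [integrable_indicator_iff hS] at hi
  simpa using (integrableOn_const_iff (C := (1 : ℂ))).1 hi

end Fourier

lemma inner_toLp_eq_integral {α : Type*} [MeasurableSpace α] {μ : Measure α} {f g : α → ℂ}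
    (hf : MemLp f 2 μ) (hg : MemLp g 2 μ) :
    inner ℂ (hf.toLp f) (hg.toLp g) = ∫ x, conj (f x) * g x ∂μ := by
  rw [L2.inner_def]
  refine integral_congr_ae ?_
  filter_upwards [hf.coeFn_toLp, hg.coeFn_toLp] with x hfx hgx
  rw [hfx, hgx, RCLike.inner_apply, mul_comm]

lemma integral_conj_indicator_one_mul_indicator_one {α : Type*} [MeasurableSpace α]
    {μ : Measure α} {s t : Set α} (hs : MeasurableSet s) (ht : MeasurableSet t) :
    ∫ x, conj (t.indicator (1 : α → ℂ) x) * s.indicator 1 x ∂μ = μ.real (s ∩ t) := by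
  have h : ∀ x, conj (t.indicator (1 : α → ℂ) x) * s.indicator 1 x
      = (s ∩ t).indicator (fun _ ↦ (1 : ℂ)) x := by
    intro x
    by_cases hxs : x ∈ s <;> by_cases hxt : x ∈ t <;> simp [hxs, hxt]
  simp_rw [h, integral_indicator_const _ (hs.inter ht), Complex.real_smul, mul_one]

lemma IsMRA.ne_zero {V : ℤ → Submodule ℂ (Lp ℂ 2 (μp p))} {φ : ℚ_[p] → ℂ} (h : IsMRA p V φ) :
    φ ≠ 0 := by
  rintro rfl
  simpa using h.orthonormal 0 ⟨0, 0, by simp, by simp⟩ 0 ⟨0, 0, by simp, by simp⟩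

theorem stmt3_general (S W : Set ℚ_[p]) (hSmeas : MeasurableSet S)
    (V : ℤ → Submodule ℂ (Lp ℂ 2 (μp p)))
    (hMRA : IsMRA p V (invFT p (Set.indicator S 1)))
    (hW : IsMultiwaveletSet p 1 W)
    (ψ : ℚ_[p] → ℂ) (hψhat : FT p ψ = Set.indicator W 1)
    (hψL2 : MemLp ψ 2 (μp p))
    (horth : ∀ g ∈ V 0, (inner ℂ (hψL2.toLp ψ) g : ℂ) = 0) :
    μp p (S ∩ W) = 0 := by
  have hSfin := measure_lt_top_of_invFT_indicator_ne_zero hSmeas hMRA.ne_zero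
  by_cases hψ : Integrable ψ (μp p)
  · obtain ⟨hφL2, hφV⟩ := hMRA.phi_mem
    have hS1 : Integrable (S.indicator (1 : ℚ_[p] → ℂ)) (μp p) :=
      (integrable_indicator_iff hSmeas).2 (integrableOn_const hSfin.ne)
    have h := horth _ hφV
    rw [inner_toLp_eq_integral, integral_conj_mul_invFT hψ hS1, hψhat,
      integral_conj_indicator_one_mul_indicator_one hSmeas hW.1] at h
    exact (measureReal_eq_zero_iff (measure_ne_top_of_subset inter_subset_left hSfin.ne)).1
      (by exact_mod_cast h)
  · have hW0 : W.indicator (1 : ℚ_[p] → ℂ) = 0 :=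
      hψhat ▸ FT_eq_zero_of_not_integrable hψL2.1 hψ
    obtain rfl : W = ∅ := eq_empty_of_forall_notMem fun t ht ↦ by
      simpa [ht] using congrFun hW0 t
    simp

/-- If `S` is a scaling set of an MRA `(V j)` and `W` is a wavelet set
whose associated wavelet `ψ` (with `ψ̂ = 1_W`) is orthogonal to `V 0`, then
`μ(S ∩ W) = 0`, i.e. `S` and `W` are disjoint up to a null set. -/
theorem stmt3 (S W : Set ℚ_[p]) (hSmeas : MeasurableSet S)
    (V : ℤ → Submodule ℂ (Lp ℂ 2 (μp p)))
    (hMRA : IsMRA p V (invFT p (Set.indicator S 1)))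
    (hW : IsMultiwaveletSet p 1 W)
    (ψ : ℚ_[p] → ℂ) (hψhat : FT p ψ = Set.indicator W 1)
    (hψwav : IsMultiwavelet p (fun _ : Fin 1 => ψ))
    (hψL2 : MemLp ψ 2 (μp p))
    (horth : ∀ g ∈ V 0, (inner ℂ (hψL2.toLp ψ) g : ℂ) = 0) :
    μp p (S ∩ W) = 0 :=
  stmt3_general S W hSmeas V hMRA hW ψ hψhat hψL2 horth

end PadicScaling
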